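/- Let T be a weighted tree with ρ > 0 under the postal model and let κ̂ be a prime broadcast center of T. Then for every vertex x ≠ κ̂, b_time(x, T) = d(x, κ̂)·ρ + w̃(x, κ̂) + b_time(κ̂, B(κ̂, x)), where d(x, κ̂) is the number of edges on the x-to-κ̂ path and w̃(x, κ̂) is the total weight of that path. -/

import Mathlib

/-!
Common definitions for the postal-model broadcasting problem on weighted trees.
-/

open SimpleGraph

namespace Postal

attribute [local instance] Classical.propDecidable

variable {V : Type*} [Fintype V] [DecidableEq V] (G : SimpleGraph V)

/-- The unique path (as a walk) between two vertices of a tree. -/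
noncomputable def tPath (hG : G.IsTree) (u v : V) : G.Walk u v :=
  (hG.existsUnique_path u v).exists.choose

/-- `z` lies in the open branch `O(x,y)`: the component of `T - x` containing `y`. -/
def inO (x y z : V) : Prop := ∃ p : G.Walk y z, x ∉ p.support

/-- The open branch `O(x,y)`. -/
def Obr (x y : V) : Set V := {z | inO G x y z}

/-- The closed branch `B(x,y) = T - O(x,y)` (it contains `x`). -/
def Bbr (x y : V) : Set V := {z | ¬ inO G x y z}

/-- The parent of `z` with respect to the root `u`: the penultimate vertex on the
unique `u`-to-`z` path. -/
noncomputable def parent (hG : G.IsTree) (u z : V) : V :=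
  (tPath G hG u z).getVert ((tPath G hG u z).length - 1)

/-- The receive time of `z` under schedule `σ` when `u` originates the message:
along the unique `u`-to-`z` path, each vertex is contacted in its slot `σ`,
contributing `σ·ρ` connection time plus the edge weight. -/
noncomputable def recvTime (hG : G.IsTree) (w : V → V → ℝ) (ρ : ℝ) (σ : V → ℕ) (u z : V) : ℝ :=
  ((tPath G hG u z).darts.map (fun d => (σ d.toProd.2 : ℝ) * ρ + w d.toProd.1 d.toProd.2)).sum

/-- A schedule `σ` is valid for source `u` broadcasting over the vertex set `S`:
every non-source vertex gets a slot `≥ 1`, and distinct vertices with the same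
parent get distinct slots (a sender contacts its neighbors sequentially). -/
def Valid (hG : G.IsTree) (σ : V → ℕ) (u : V) (S : Set V) : Prop :=
  (∀ z ∈ S, z ≠ u → 1 ≤ σ z) ∧
  (∀ z₁ ∈ S, ∀ z₂ ∈ S, z₁ ≠ u → z₂ ≠ u → z₁ ≠ z₂ →
    parent G hG u z₁ = parent G hG u z₂ → σ z₁ ≠ σ z₂)

/-- The minimum broadcast time for `u` to broadcast a message over the subtree
induced by `S` under the postal model with latency `ρ`. -/
noncomputable def bTime (hG : G.IsTree) (w : V → V → ℝ) (ρ : ℝ) (u : V) (S : Set V) : ℝ :=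
  sInf {m | ∃ σ, Valid G hG σ u S ∧ m = sSup ((recvTime G hG w ρ σ u) '' S)}

/-- Broadcast time over the whole tree. -/
noncomputable def bTimeT (hG : G.IsTree) (w : V → V → ℝ) (ρ : ℝ) (u : V) : ℝ :=
  bTime G hG w ρ u Set.univ

/-- The set of broadcast centers. -/
def BCtr (hG : G.IsTree) (w : V → V → ℝ) (ρ : ℝ) : Set V :=
  {u | ∀ v, bTimeT G hG w ρ u ≤ bTimeT G hG w ρ v}

/-- A prime broadcast center. -/
def IsPrime (hG : G.IsTree) (w : V → V → ℝ) (ρ : ℝ) (κ : V) : Prop :=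
  κ ∈ BCtr G hG w ρ ∧
  ∀ u, G.Adj κ u → bTime G hG w ρ u (Bbr G u κ) ≤ bTime G hG w ρ κ (Bbr G κ u)

/-- Hop distance: number of edges on the unique path. -/
noncomputable def hop (hG : G.IsTree) (x y : V) : ℕ := (tPath G hG x y).length

/-- Total weight of the unique `x`-to-`y` path. -/
noncomputable def pw (hG : G.IsTree) (w : V → V → ℝ) (x y : V) : ℝ :=
  ((tPath G hG x y).darts.map (fun d => w d.toProd.1 d.toProd.2)).sum

/-- Symmetric weight function. -/
def Wsymm (w : V → V → ℝ) : Prop := ∀ a b, w a b = w b a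

/-- Positive weights on edges. -/
def Wpos (w : V → V → ℝ) : Prop := ∀ a b, G.Adj a b → 0 < w a b

/-- A scenario: a symmetric weight assignment within the uncertainty intervals. -/
def Scenario (lo hi : V → V → ℝ) (w : V → V → ℝ) : Prop :=
  (∀ a b, w a b = w b a) ∧ ∀ a b, G.Adj a b → lo a b ≤ w a b ∧ w a b ≤ hi a b

/-- The maximum regret of `x`. -/
noncomputable def maxRegret (hG : G.IsTree) (lo hi : V → V → ℝ) (ρ : ℝ) (x : V) : ℝ :=
  sSup {r | ∃ w y, Scenario G lo hi w ∧ r = bTimeT G hG w ρ x - bTimeT G hG w ρ y}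

/-- `w` is a worst-case scenario of the tree with respect to `x`. -/
def WorstCase (hG : G.IsTree) (lo hi : V → V → ℝ) (ρ : ℝ) (x : V) (w : V → V → ℝ) : Prop :=
  Scenario G lo hi w ∧
  ∃ y, bTimeT G hG w ρ x - bTimeT G hG w ρ y = maxRegret G hG lo hi ρ x

/-- An edge `(a,b)` lies on the unique `x`-to-`y` path. -/
def onPath (hG : G.IsTree) (x y a b : V) : Prop :=
  a ∈ (tPath G hG x y).support ∧ b ∈ (tPath G hG x y).support

/-- The base scenario `α_{x,y}`: weight `hi` on the `x`-to-`y` path and on edges of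
`B(y,x)`, weight `lo` elsewhere. -/
noncomputable def baseScenario (hG : G.IsTree) (lo hi : V → V → ℝ) (x y : V) : V → V → ℝ :=
  fun a b =>
    if onPath G hG x y a b ∨ (a ∈ Bbr G y x ∧ b ∈ Bbr G y x) then hi a b else lo a b

/-- The value `w(y,v) + b_time(v, B(v,y))` of a neighbor `v` of `y`. -/
noncomputable def nval (hG : G.IsTree) (w : V → V → ℝ) (ρ : ℝ) (y v : V) : ℝ :=
  w y v + bTime G hG w ρ v (Bbr G v y)

/-- Scenario `β^j_{x,y}`: agrees with `α_{x,y}`, except that every edge in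
`{(y,u_k)} ∪ E(B(u_k,y))` for `k > j` (with `u` the 1-based sorted enumeration
of the neighbors of `y` in `B(y,x)`) gets weight `lo`. -/
noncomputable def betaScenario (hG : G.IsTree) (lo hi : V → V → ℝ) (x y : V) {h : ℕ}
    (u : Fin h → V) (j : ℕ) : V → V → ℝ :=
  fun a b =>
    if ∃ k : Fin h, j < (k : ℕ) + 1 ∧
        ((a = y ∧ b = u k) ∨ (b = y ∧ a = u k) ∨
          (a ∈ Bbr G (u k) y ∧ b ∈ Bbr G (u k) y)) then
      lo a b
    else baseScenario G hG lo hi x y a b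

/-- Scenario `γ^j_{x,y}`: agrees with `α_{x,y}` on the edges in
`⋃_{1 ≤ k ≤ j} ({(y,u_k)} ∪ E(B(u_k,y)))` and with the scenario `s` elsewhere. -/
noncomputable def gammaScenario (hG : G.IsTree) (lo hi : V → V → ℝ) (s : V → V → ℝ)
    (x y : V) {h : ℕ} (u : Fin h → V) (j : ℕ) : V → V → ℝ :=
  fun a b =>
    if ∃ k : Fin h, (k : ℕ) + 1 ≤ j ∧
        ((a = y ∧ b = u k) ∨ (b = y ∧ a = u k) ∨
          (a ∈ Bbr G (u k) y ∧ b ∈ Bbr G (u k) y)) then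
      baseScenario G hG lo hi x y a b
    else s a b

/-- The set of neighbors of `y` inside the branch `B(y,x)`. -/
def nbrIn (x y : V) : Set V := {v | G.Adj y v ∧ v ∈ Bbr G y x}

end Postal

/-!
Let `y` be the neighbour of `x` towards `κ̂`. Every schedule from `x` needs at least
`ρ + w(x,y) + b_time(y, B(y,x))` to cover `B(y,x)`, and calling `y` first, then serving
`B(x,y)` optimally one slot later, achieves
`max (ρ + b_time(x, B(x,y))) (ρ + w(x,y) + b_time(y, B(y,x)))`.
Propagating the primality of `κ̂` back along the path gives
`b_time(x, B(x,y)) ≤ b_time(κ̂, B(κ̂,x))`, so the second term dominates, and induction on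
`d(x,κ̂)` unrolls `b_time(y, B(y,x))`.
-/

open SimpleGraph.Walk

namespace Postal

variable {V : Type*} {G : SimpleGraph V} {w : V → V → ℝ} {ρ : ℝ}

theorem _root_.SimpleGraph.Walk.IsPath.start_notMem_support_dropUntil [DecidableEq V]
    {c z a : V} {p : G.Walk c z} (hp : p.IsPath) (ha : a ∈ p.support) (hac : a ≠ c) :
    c ∉ (p.dropUntil a ha).support := by
  intro hc
  have hnd := hp.support_nodup
  rw [← p.take_spec ha, support_append] at hnd
  rw [← cons_tail_support, List.mem_cons] at hc
  exact List.disjoint_of_nodup_append hnd (start_mem_support _)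
    (hc.resolve_left hac.symm)

theorem inO.symm {x y z : V} (h : inO G x y z) : inO G x z y := by
  obtain ⟨p, hp⟩ := h
  exact ⟨p.reverse, by simpa using hp⟩

theorem inO.trans {x a b c : V} (h₁ : inO G x a b) (h₂ : inO G x b c) : inO G x a c := by
  obtain ⟨p, hp⟩ := h₁
  obtain ⟨q, hq⟩ := h₂
  exact ⟨p.append q, by simp [hp, hq]⟩

theorem inO_self {x y : V} (h : y ≠ x) : inO G x y y :=
  ⟨nil, by simpa using h.symm⟩

theorem mem_Bbr_self (x y : V) : x ∈ Bbr G x y :=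
  fun ⟨p, hp⟩ => hp p.end_mem_support

theorem notMem_Bbr {u v : V} (h : u ≠ v) : u ∉ Bbr G v u :=
  fun hu => hu (inO_self h)

theorem ne_of_mem_Bbr {u v z : V} (h : u ≠ v) (hz : z ∈ Bbr G v u) : z ≠ u :=
  fun hzu => notMem_Bbr h (hzu ▸ hz)

theorem Bbr_eq_of_inO {a b c : V} (h : inO G a b c) : Bbr G a b = Bbr G a c := by
  ext z
  exact not_congr ⟨h.symm.trans, h.trans⟩

theorem Obr_subset_Bbr {x y κ : V} (hκ : κ ∈ Bbr G y x) : Obr G y κ ⊆ Bbr G y x :=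
  fun _ hz hxz => hκ (hxz.trans hz.symm)

theorem tPath_isPath (hG : G.IsTree) (u v : V) : (tPath G hG u v).IsPath :=
  (hG.existsUnique_path u v).exists.choose_spec

theorem eq_tPath (hG : G.IsTree) {u v : V} {p : G.Walk u v} (hp : p.IsPath) : p = tPath G hG u v :=
  (hG.existsUnique_path u v).unique hp (tPath_isPath hG u v)

theorem tPath_self (hG : G.IsTree) (u : V) : tPath G hG u u = nil :=
  (eq_tPath hG IsPath.nil).symm

theorem inO_iff (hG : G.IsTree) {x y z : V} : inO G x y z ↔ x ∉ (tPath G hG y z).support := by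
  classical
  refine ⟨fun ⟨p, hp⟩ hx => hp ?_, fun h => ⟨_, h⟩⟩
  rw [← eq_tPath hG p.bypass_isPath] at hx
  exact p.support_bypass_subset_support hx

theorem mem_Bbr_iff (hG : G.IsTree) {a b z : V} :
    z ∈ Bbr G a b ↔ a ∈ (tPath G hG b z).support :=
  (inO_iff hG).not_left

theorem support_tPath_subset_Bbr (hG : G.IsTree) {u v z : V} (hz : z ∈ Bbr G u v) :
    ∀ y ∈ (tPath G hG u z).support, y ∈ Bbr G u v := by
  classical
  intro y hy hvy
  obtain rfl | hyu := eq_or_ne y u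
  · exact mem_Bbr_self _ _ hvy
  · exact hz (hvy.trans ⟨_, (tPath_isPath hG u z).start_notMem_support_dropUntil hy hyu⟩)

theorem mem_Bbr_iff_inO (hG : G.IsTree) {u v z : V} (h : G.Adj u v) :
    z ∈ Bbr G v u ↔ inO G u v z := by
  refine ⟨fun hz => ⟨tPath G hG v z, fun hu => ?_⟩, fun ⟨p, hp⟩ => ?_⟩
  · exact notMem_Bbr h.ne (support_tPath_subset_Bbr hG hz u hu)
  · have hu : u ∉ (tPath G hG v z).support := (inO_iff hG).mp ⟨p, hp⟩
    rw [mem_Bbr_iff hG, ← eq_tPath hG ((tPath_isPath hG v z).cons hu (h := h))]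
    simp

theorem mem_Bbr_iff_notMem_Bbr (hG : G.IsTree) {u v z : V} (h : G.Adj u v) :
    z ∈ Bbr G v u ↔ z ∉ Bbr G u v := by
  rw [mem_Bbr_iff_inO hG h, Bbr, Set.mem_ofPred_eq, not_not]

theorem mem_Bbr_or_mem_Bbr (hG : G.IsTree) {u v : V} (h : G.Adj u v) (z : V) :
    z ∈ Bbr G u v ∨ z ∈ Bbr G v u := by
  rw [mem_Bbr_iff_notMem_Bbr hG h]
  exact em _

theorem tPath_eq_cons (hG : G.IsTree) {u v z : V} (h : G.Adj u v) (hz : z ∈ Bbr G v u) :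
    tPath G hG u z = cons h (tPath G hG v z) :=
  have hu := (inO_iff hG).mp ((mem_Bbr_iff_inO hG h).mp hz)
  (eq_tPath hG ((tPath_isPath hG v z).cons hu)).symm

theorem exists_adj_mem_Bbr (hG : G.IsTree) {x z : V} (h : x ≠ z) :
    ∃ y, G.Adj x y ∧ z ∈ Bbr G y x := by
  obtain ⟨y, hxy, q, hq⟩ := exists_eq_cons_of_ne h (tPath G hG x z)
  exact ⟨y, hxy, (mem_Bbr_iff hG).mpr (by simp [hq])⟩

theorem Bbr_subset_Bbr (hG : G.IsTree) {a c d : V} (h : G.Adj a c) (ha : a ∈ Bbr G c d) :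
    Bbr G a c ⊆ Bbr G c d :=
  fun _ hz hdz => ha (hdz.trans ((mem_Bbr_iff_inO hG h.symm).mp hz).symm)

theorem Obr_eq_Bbr (hG : G.IsTree) {x y κ : V} (h : G.Adj x y) (hκ : κ ∈ Bbr G y x) :
    Obr G x κ = Bbr G y x := by
  have hyκ := (mem_Bbr_iff_inO hG h).mp hκ
  ext z
  rw [mem_Bbr_iff_inO hG h]
  exact ⟨hyκ.trans, hyκ.symm.trans⟩

theorem Bbr_eq_of_adj {κ x y : V} (h : G.Adj x y) (hx : κ ≠ x) (hy : κ ≠ y) :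
    Bbr G κ y = Bbr G κ x :=
  Bbr_eq_of_inO ⟨cons h.symm nil, by simp [hx, hy]⟩

theorem parent_mem_support (hG : G.IsTree) (u z : V) :
    parent G hG u z ∈ (tPath G hG u z).support :=
  mem_support_iff_exists_getVert.mpr ⟨_, rfl, Nat.sub_le _ _⟩

theorem parent_mem_Bbr (hG : G.IsTree) {u v z : V} (hz : z ∈ Bbr G u v) :
    parent G hG u z ∈ Bbr G u v :=
  support_tPath_subset_Bbr hG hz _ (parent_mem_support hG u z)

theorem parent_of_adj (hG : G.IsTree) {u z : V} (h : G.Adj u z) : parent G hG u z = u := by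
  have ht : tPath G hG u z = cons h nil :=
    (eq_tPath hG (IsPath.nil.cons (by simpa using h.ne))).symm
  simp [parent, ht]

theorem parent_eq_parent (hG : G.IsTree) {u v z : V} (h : G.Adj u v) (hz : z ∈ Bbr G v u)
    (hzv : z ≠ v) : parent G hG u z = parent G hG v z := by
  have h0 : (tPath G hG v z).length ≠ 0 := fun h0 => hzv (eq_of_length_eq_zero h0).symm
  rw [parent, parent, tPath_eq_cons hG h hz, length_cons, Nat.add_sub_cancel, getVert_cons _ _ h0]

theorem parent_mem_Bbr_of_ne (hG : G.IsTree) {u v z : V} (h : G.Adj u v) (hz : z ∈ Bbr G v u)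
    (hzv : z ≠ v) : parent G hG u z ∈ Bbr G v u :=
  parent_eq_parent hG h hz hzv ▸ parent_mem_Bbr hG hz

theorem mem_Bbr_of_parent_mem (hG : G.IsTree) {u v z : V} (h : G.Adj u v)
    (hp : parent G hG u z ∈ Bbr G v u) : z ∈ Bbr G v u ∧ z ≠ v := by
  refine ⟨?_, ?_⟩
  · rw [mem_Bbr_iff_notMem_Bbr hG h] at hp ⊢
    exact fun hz => hp (parent_mem_Bbr hG hz)
  · rintro rfl
    exact notMem_Bbr h.ne (parent_of_adj hG h ▸ hp)

theorem mem_tail_support_tPath (hG : G.IsTree) {u v z t : V} (h : G.Adj u v)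
    (hz : z ∈ Bbr G v u) (ht : t ∈ (tPath G hG v z).support.tail) :
    t ∈ Bbr G v u ∧ t ≠ v := by
  refine ⟨support_tPath_subset_Bbr hG hz t (List.mem_of_mem_tail ht), ?_⟩
  rintro rfl
  have hnd := (tPath_isPath hG t z).support_nodup
  rw [← cons_tail_support] at hnd
  exact (List.nodup_cons.mp hnd).1 ht

theorem recvTime_self (hG : G.IsTree) (σ : V → ℕ) (u : V) : recvTime G hG w ρ σ u u = 0 := by
  simp [recvTime, tPath_self]

theorem recvTime_congr (hG : G.IsTree) {σ σ' : V → ℕ} {u z : V}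
    (h : ∀ t ∈ (tPath G hG u z).support.tail, σ t = σ' t) :
    recvTime G hG w ρ σ u z = recvTime G hG w ρ σ' u z := by
  refine congrArg List.sum (List.map_congr_left fun d hd => ?_)
  rw [h d.toProd.2 (by rw [← map_snd_darts]; exact List.mem_map_of_mem hd)]

theorem recvTime_eq_add (hG : G.IsTree) {u v z : V} (h : G.Adj u v) (hz : z ∈ Bbr G v u)
    (σ : V → ℕ) :
    recvTime G hG w ρ σ u z = σ v * ρ + w u v + recvTime G hG w ρ σ v z := by
  simp [recvTime, tPath_eq_cons hG h hz, add_assoc]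

theorem hop_self (hG : G.IsTree) (u : V) : hop G hG u u = 0 := by
  simp [hop, tPath_self]

theorem hop_eq_zero (hG : G.IsTree) {u z : V} (h : hop G hG u z = 0) : u = z :=
  eq_of_length_eq_zero h

theorem hop_eq_add_one (hG : G.IsTree) {u v z : V} (h : G.Adj u v) (hz : z ∈ Bbr G v u) :
    hop G hG u z = hop G hG v z + 1 := by
  simp [hop, tPath_eq_cons hG h hz]

theorem pw_self (hG : G.IsTree) (u : V) : pw G hG w u u = 0 := by
  simp [pw, tPath_self]

theorem pw_eq_add (hG : G.IsTree) {u v z : V} (h : G.Adj u v) (hz : z ∈ Bbr G v u) :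
    pw G hG w u z = w u v + pw G hG w v z := by
  simp [pw, tPath_eq_cons hG h hz]

theorem pw_nonneg (hG : G.IsTree) (hw : ∀ a b, G.Adj a b → 0 ≤ w a b) (u z : V) :
    0 ≤ pw G hG w u z :=
  List.sum_nonneg fun _ hr => by
    obtain ⟨d, -, rfl⟩ := List.mem_map.mp hr
    exact hw _ _ d.adj

theorem exists_valid [Countable V] (hG : G.IsTree) (u : V) (S : Set V) :
    ∃ σ, Valid G hG σ u S := by
  obtain ⟨f, hf⟩ := Countable.exists_injective_nat V
  exact ⟨fun z => f z + 1, fun _ _ _ => Nat.le_add_left 1 _,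
    fun _ _ _ _ _ _ hne _ hσ => hne (hf (Nat.add_right_cancel hσ))⟩

theorem Valid.mono {hG : G.IsTree} {σ : V → ℕ} {u : V} {S₁ S₂ : Set V}
    (h : Valid G hG σ u S₂) (hS : S₁ ⊆ S₂) : Valid G hG σ u S₁ :=
  ⟨fun z hz => h.1 z (hS hz), fun z₁ h₁ z₂ h₂ => h.2 z₁ (hS h₁) z₂ (hS h₂)⟩

theorem recvTime_le_sSup [Finite V] (hG : G.IsTree) (σ : V → ℕ) (u : V) {z : V} {S : Set V}
    (hz : z ∈ S) : recvTime G hG w ρ σ u z ≤ sSup (recvTime G hG w ρ σ u '' S) :=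
  le_csSup (S.toFinite.image _).bddAbove ⟨z, hz, rfl⟩

theorem sSup_recvTime_nonneg [Finite V] (hG : G.IsTree) {σ : V → ℕ} {u : V} {S : Set V}
    (hu : u ∈ S) : 0 ≤ sSup (recvTime G hG w ρ σ u '' S) :=
  recvTime_self (w := w) (ρ := ρ) hG σ u ▸ recvTime_le_sSup hG σ u hu

theorem bTime_le_sSup [Finite V] (hG : G.IsTree) {σ : V → ℕ} {u : V} {S : Set V}
    (hu : u ∈ S) (hσ : Valid G hG σ u S) :
    bTime G hG w ρ u S ≤ sSup (recvTime G hG w ρ σ u '' S) :=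
  csInf_le ⟨0, by rintro _ ⟨_, -, rfl⟩; exact sSup_recvTime_nonneg hG hu⟩ ⟨σ, hσ, rfl⟩

theorem le_bTime [Countable V] (hG : G.IsTree) {u : V} {S : Set V} {c : ℝ}
    (h : ∀ σ, Valid G hG σ u S → c ≤ sSup (recvTime G hG w ρ σ u '' S)) :
    c ≤ bTime G hG w ρ u S := by
  obtain ⟨σ, hσ⟩ := exists_valid hG u S
  exact le_csInf ⟨_, σ, hσ, rfl⟩ (by rintro _ ⟨σ, hσ, rfl⟩; exact h σ hσ)

theorem exists_sSup_lt_bTime_add [Countable V] (hG : G.IsTree) (u : V) (S : Set V) {ε : ℝ}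
    (hε : 0 < ε) :
    ∃ σ, Valid G hG σ u S ∧
      sSup (recvTime G hG w ρ σ u '' S) < bTime G hG w ρ u S + ε := by
  obtain ⟨σ₀, hσ₀⟩ := exists_valid hG u S
  obtain ⟨_, ⟨σ, hσ, rfl⟩, hlt⟩ := Real.lt_sInf_add_pos
    (s := {m | ∃ σ, Valid G hG σ u S ∧ m = sSup (recvTime G hG w ρ σ u '' S)})
    ⟨_, σ₀, hσ₀, rfl⟩ hε
  exact ⟨σ, hσ, hlt⟩

theorem bTime_nonneg [Finite V] (hG : G.IsTree) {u : V} {S : Set V} (hu : u ∈ S) :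
    0 ≤ bTime G hG w ρ u S :=
  le_bTime hG fun _ _ => sSup_recvTime_nonneg hG hu

theorem bTime_mono [Finite V] (hG : G.IsTree) {u : V} {S₁ S₂ : Set V} (hu : u ∈ S₁)
    (hS : S₁ ⊆ S₂) : bTime G hG w ρ u S₁ ≤ bTime G hG w ρ u S₂ :=
  le_bTime hG fun _ hσ => (bTime_le_sSup hG hu (hσ.mono hS)).trans <|
    csSup_le_csSup (S₂.toFinite.image _).bddAbove ⟨_, u, hu, rfl⟩ (Set.image_mono hS)

theorem Valid.branch {hG : G.IsTree} {σ : V → ℕ} {u v : V} {S : Set V}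
    (hσ : Valid G hG σ u S) (h : G.Adj u v) (hS : Bbr G v u ⊆ S) :
    Valid G hG σ v (Bbr G v u) :=
  ⟨fun z hz _ => hσ.1 z (hS hz) (ne_of_mem_Bbr h.ne hz),
    fun z₁ h₁ z₂ h₂ hz₁ hz₂ hne hpar =>
      hσ.2 z₁ (hS h₁) z₂ (hS h₂) (ne_of_mem_Bbr h.ne h₁) (ne_of_mem_Bbr h.ne h₂) hne
        (by rwa [parent_eq_parent hG h h₁ hz₁, parent_eq_parent hG h h₂ hz₂])⟩

theorem le_bTime_of_adj [Finite V] (hG : G.IsTree) (hρ : 0 ≤ ρ) {u v : V} (h : G.Adj u v)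
    {S : Set V} (hS : Bbr G v u ⊆ S) :
    ρ + w u v + bTime G hG w ρ v (Bbr G v u) ≤ bTime G hG w ρ u S := by
  refine le_bTime hG fun σ hσ => ?_
  have hσv : (1 : ℝ) ≤ σ v := by exact_mod_cast hσ.1 v (hS (mem_Bbr_self v u)) h.ne'
  suffices sSup (recvTime G hG w ρ σ v '' Bbr G v u)
      ≤ sSup (recvTime G hG w ρ σ u '' S) - (ρ + w u v) by
    linarith [bTime_le_sSup (w := w) (ρ := ρ) hG (mem_Bbr_self v u) (hσ.branch h hS)]
  refine csSup_le (Set.image_nonempty.mpr ⟨v, mem_Bbr_self v u⟩) ?_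
  rintro _ ⟨z, hz, rfl⟩
  have hle := recvTime_le_sSup (w := w) (ρ := ρ) hG σ u (hS hz)
  rw [recvTime_eq_add hG h hz] at hle
  linarith [mul_le_mul_of_nonneg_right hσv hρ]

section CallFirst

open Classical in
noncomputable def callFirst (hG : G.IsTree) (u v : V) (σ₁ σ₂ : V → ℕ) : V → ℕ :=
  fun z => if z ∈ Bbr G v u then (if z = v then 1 else σ₂ z)
  else σ₁ z + if parent G hG u z = u then 1 else 0

variable {hG : G.IsTree} {u v : V} {σ₁ σ₂ : V → ℕ}

theorem callFirst_self : callFirst hG u v σ₁ σ₂ v = 1 := by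
  simp [callFirst, mem_Bbr_self]

theorem callFirst_of_mem_right {z : V} (hz : z ∈ Bbr G v u) (hzv : z ≠ v) :
    callFirst hG u v σ₁ σ₂ z = σ₂ z := by
  simp [callFirst, hz, hzv]

theorem callFirst_of_mem_left_of_parent_eq (h : G.Adj u v) {z : V} (hz : z ∈ Bbr G u v)
    (hpz : parent G hG u z = u) : callFirst hG u v σ₁ σ₂ z = σ₁ z + 1 := by
  simp [callFirst, (mem_Bbr_iff_notMem_Bbr hG h).not_left.mpr hz, hpz]

theorem callFirst_of_mem_left_of_parent_ne (h : G.Adj u v) {z : V} (hz : z ∈ Bbr G u v)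
    (hpz : parent G hG u z ≠ u) : callFirst hG u v σ₁ σ₂ z = σ₁ z := by
  simp [callFirst, (mem_Bbr_iff_notMem_Bbr hG h).not_left.mpr hz, hpz]

theorem valid_callFirst (h : G.Adj u v) {S : Set V} (h₁ : Valid G hG σ₁ u (S ∩ Bbr G u v))
    (h₂ : Valid G hG σ₂ v (S ∩ Bbr G v u)) :
    Valid G hG (callFirst hG u v σ₁ σ₂) u S := by
  refine ⟨fun z hzS hzu => ?_, fun z₁ hz₁ z₂ hz₂ hz₁u hz₂u hne hpar => ?_⟩
  · rcases mem_Bbr_or_mem_Bbr hG h z with hz | hz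
    · have := h₁.1 z ⟨hzS, hz⟩ hzu
      by_cases hpz : parent G hG u z = u
      · rw [callFirst_of_mem_left_of_parent_eq h hz hpz]
        omega
      · rwa [callFirst_of_mem_left_of_parent_ne h hz hpz]
    · obtain rfl | hzv := eq_or_ne z v
      · rw [callFirst_self]
      · rw [callFirst_of_mem_right hz hzv]
        exact h₂.1 z ⟨hzS, hz⟩ hzv
  by_cases hp : parent G hG u z₁ ∈ Bbr G v u
  · obtain ⟨hb₁, hv₁⟩ := mem_Bbr_of_parent_mem hG h hp
    obtain ⟨hb₂, hv₂⟩ := mem_Bbr_of_parent_mem hG h (hpar ▸ hp)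
    rw [callFirst_of_mem_right hb₁ hv₁, callFirst_of_mem_right hb₂ hv₂]
    refine h₂.2 z₁ ⟨hz₁, hb₁⟩ z₂ ⟨hz₂, hb₂⟩ hv₁ hv₂ hne ?_
    rwa [← parent_eq_parent hG h hb₁ hv₁, ← parent_eq_parent hG h hb₂ hv₂]
  have hleft : ∀ z, parent G hG u z ∉ Bbr G v u → z = v ∨ z ∈ Bbr G u v := fun z hz =>
    (mem_Bbr_or_mem_Bbr hG h z).symm.elim
      (fun hb => .inl (by_contra fun hzv => hz (parent_mem_Bbr_of_ne hG h hb hzv))) .inr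
  have hne_one : ∀ z ∈ S, z ∈ Bbr G u v → z ≠ u → parent G hG u z = u →
      callFirst hG u v σ₁ σ₂ z ≠ 1 := by
    intro z hzS hz hzu hpz
    have := h₁.1 z ⟨hzS, hz⟩ hzu
    rw [callFirst_of_mem_left_of_parent_eq h hz hpz]
    omega
  rcases hleft z₁ hp with rfl | hb₁ <;> rcases hleft z₂ (hpar ▸ hp) with rfl | hb₂
  · exact absurd rfl hne
  · rw [callFirst_self]
    exact (hne_one z₂ hz₂ hb₂ hz₂u (hpar.symm.trans (parent_of_adj hG h))).symm
  · rw [callFirst_self]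
    exact hne_one z₁ hz₁ hb₁ hz₁u (hpar.trans (parent_of_adj hG h))
  · have := h₁.2 z₁ ⟨hz₁, hb₁⟩ z₂ ⟨hz₂, hb₂⟩ hz₁u hz₂u hne hpar
    by_cases hpz : parent G hG u z₂ = u
    · rw [callFirst_of_mem_left_of_parent_eq h hb₁ (hpar.trans hpz),
        callFirst_of_mem_left_of_parent_eq h hb₂ hpz]
      omega
    · rwa [callFirst_of_mem_left_of_parent_ne h hb₁ (hpar ▸ hpz),
        callFirst_of_mem_left_of_parent_ne h hb₂ hpz]

theorem recvTime_callFirst_of_mem_right (h : G.Adj u v) {z : V} (hz : z ∈ Bbr G v u) :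
    recvTime G hG w ρ (callFirst hG u v σ₁ σ₂) u z =
      ρ + w u v + recvTime G hG w ρ σ₂ v z := by
  rw [recvTime_eq_add hG h hz, callFirst_self, Nat.cast_one, one_mul,
    recvTime_congr hG (σ' := σ₂) fun t ht => ?_]
  obtain ⟨htB, htv⟩ := mem_tail_support_tPath hG h hz ht
  exact callFirst_of_mem_right htB htv

theorem recvTime_callFirst_of_mem_left (h : G.Adj u v) {z : V} (hz : z ∈ Bbr G u v)
    (hzu : z ≠ u) :
    recvTime G hG w ρ (callFirst hG u v σ₁ σ₂) u z = recvTime G hG w ρ σ₁ u z + ρ := by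
  obtain ⟨y, huy, hzy⟩ := exists_adj_mem_Bbr hG hzu.symm
  have hsub : ∀ t ∈ (tPath G hG y z).support, t ∈ Bbr G u v := fun t ht =>
    support_tPath_subset_Bbr hG hz t (by simp [tPath_eq_cons hG huy hzy, ht])
  have hy : callFirst hG u v σ₁ σ₂ y = σ₁ y + 1 := by
    rw [callFirst_of_mem_left_of_parent_eq h (hsub y (start_mem_support _)) (parent_of_adj hG huy)]
  have htail : ∀ t ∈ (tPath G hG y z).support.tail,
      callFirst hG u v σ₁ σ₂ t = σ₁ t := by
    intro t ht
    obtain ⟨htB, hty⟩ := mem_tail_support_tPath hG huy hzy ht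
    have hpt : parent G hG u t ≠ u := fun hpt =>
      notMem_Bbr huy.ne (hpt ▸ parent_mem_Bbr_of_ne hG huy htB hty)
    rw [callFirst_of_mem_left_of_parent_ne h (hsub t (List.mem_of_mem_tail ht)) hpt]
  rw [recvTime_eq_add hG huy hzy, recvTime_eq_add hG huy hzy, hy, recvTime_congr hG htail]
  push_cast
  ring

end CallFirst

theorem bTime_le_max_of_adj [Finite V] (hG : G.IsTree) (hρ : 0 ≤ ρ) {u v : V} (h : G.Adj u v)
    {S : Set V} (huS : u ∈ S) :
    bTime G hG w ρ u S ≤ max (ρ + bTime G hG w ρ u (S ∩ Bbr G u v))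
      (ρ + w u v + bTime G hG w ρ v (S ∩ Bbr G v u)) := by
  refine le_of_forall_pos_le_add fun ε hε => ?_
  obtain ⟨σ₁, hσ₁, hlt₁⟩ := exists_sSup_lt_bTime_add (w := w) (ρ := ρ) hG u _ hε
  obtain ⟨σ₂, hσ₂, hlt₂⟩ := exists_sSup_lt_bTime_add (w := w) (ρ := ρ) hG v _ hε
  refine (bTime_le_sSup hG huS (valid_callFirst h hσ₁ hσ₂)).trans
    (csSup_le (Set.image_nonempty.mpr ⟨u, huS⟩) ?_)
  have hA := le_max_left (ρ + bTime G hG w ρ u (S ∩ Bbr G u v))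
    (ρ + w u v + bTime G hG w ρ v (S ∩ Bbr G v u))
  have hB := le_max_right (ρ + bTime G hG w ρ u (S ∩ Bbr G u v))
    (ρ + w u v + bTime G hG w ρ v (S ∩ Bbr G v u))
  rintro _ ⟨z, hzS, rfl⟩
  rcases mem_Bbr_or_mem_Bbr hG h z with hz | hz
  · obtain rfl | hzu := eq_or_ne z u
    · rw [recvTime_self]
      linarith [bTime_nonneg (w := w) (ρ := ρ) (S := S ∩ Bbr G z v) hG ⟨hzS, hz⟩]
    · rw [recvTime_callFirst_of_mem_left h hz hzu]
      linarith [recvTime_le_sSup (w := w) (ρ := ρ) (S := S ∩ Bbr G u v) hG σ₁ u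
        ⟨hzS, hz⟩]
  · rw [recvTime_callFirst_of_mem_right h hz]
    linarith [recvTime_le_sSup (w := w) (ρ := ρ) (S := S ∩ Bbr G v u) hG σ₂ v ⟨hzS, hz⟩]

theorem bTime_Bbr_le_of_isPrime [Finite V] (hG : G.IsTree) (hρ : 0 ≤ ρ)
    (hw : ∀ a b, G.Adj a b → 0 ≤ w a b) {κ : V} (hκ : IsPrime G hG w ρ κ) {x y : V}
    (hxy : G.Adj x y) (hκy : κ ∈ Bbr G y x) :
    bTime G hG w ρ x (Bbr G x y) ≤ bTime G hG w ρ κ (Bbr G κ x) := by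
  obtain ⟨n, hn⟩ : ∃ n, hop G hG y κ = n := ⟨_, rfl⟩
  induction n generalizing x y with
  | zero =>
    obtain rfl := hop_eq_zero hG hn
    exact hκ.2 x hxy.symm
  | succ n ih =>
    have hyκ : y ≠ κ := by
      rintro rfl
      simp [hop_self] at hn
    obtain ⟨y', hyy', hκy'⟩ := exists_adj_mem_Bbr hG hyκ
    have hx : x ∈ Bbr G y y' := fun hy'x =>
      hκy (hy'x.symm.trans ((mem_Bbr_iff_inO hG hyy').mp hκy'))
    calc bTime G hG w ρ x (Bbr G x y)
        ≤ ρ + w y x + bTime G hG w ρ x (Bbr G x y) := by linarith [hw y x hxy.symm]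
      _ ≤ bTime G hG w ρ y (Bbr G y y') :=
        le_bTime_of_adj hG hρ hxy.symm (Bbr_subset_Bbr hG hxy hx)
      _ ≤ bTime G hG w ρ κ (Bbr G κ y) :=
        ih hyy' hκy' (by rw [hop_eq_add_one hG hyy' hκy'] at hn; omega)
      _ = bTime G hG w ρ κ (Bbr G κ x) := by
        rw [Bbr_eq_of_adj hxy (ne_of_mem_Bbr hxy.ne hκy) hyκ.symm]

theorem bTime_eq_of_isPrime [Finite V] (hG : G.IsTree) (hρ : 0 ≤ ρ)
    (hw : ∀ a b, G.Adj a b → 0 ≤ w a b) {κ : V} (hκ : IsPrime G hG w ρ κ) {x : V}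
    (hx : x ≠ κ) {S : Set V} (hxS : x ∈ S) (hS : Obr G x κ ⊆ S) :
    bTime G hG w ρ x S =
      hop G hG x κ * ρ + pw G hG w x κ + bTime G hG w ρ κ (Bbr G κ x) := by
  obtain ⟨n, hn⟩ : ∃ n, hop G hG x κ = n := ⟨_, rfl⟩
  induction n generalizing x S with
  | zero => exact absurd (hop_eq_zero hG hn) hx
  | succ n ih =>
    obtain ⟨y, hxy, hκy⟩ := exists_adj_mem_Bbr hG hx
    have hyS : Bbr G y x ⊆ S := Obr_eq_Bbr hG hxy hκy ▸ hS
    rw [hop_eq_add_one hG hxy hκy] at hn ⊢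
    rw [pw_eq_add hG hxy hκy]
    have hstep : ρ + w x y + bTime G hG w ρ y (Bbr G y x)
        = (hop G hG y κ + 1 : ℕ) * ρ + (w x y + pw G hG w y κ) +
          bTime G hG w ρ κ (Bbr G κ x) := by
      obtain rfl | hyκ := eq_or_ne y κ
      · simp [hop_self, pw_self]
      · rw [ih hyκ (mem_Bbr_self y x) (Obr_subset_Bbr hκy) (by omega),
          Bbr_eq_of_adj hxy (ne_of_mem_Bbr hxy.ne hκy) hyκ.symm]
        push_cast
        ring
    refine le_antisymm ?_ (hstep ▸ le_bTime_of_adj hG hρ hxy hyS)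
    refine (bTime_le_max_of_adj hG hρ hxy hxS).trans (max_le ?_ ?_)
    · have hchain := bTime_Bbr_le_of_isPrime hG hρ hw hκ hxy hκy
      have hmono := bTime_mono (w := w) (ρ := ρ) (S₁ := S ∩ Bbr G x y) hG
        ⟨hxS, mem_Bbr_self x y⟩ Set.inter_subset_right
      push_cast
      linarith [hw x y hxy, pw_nonneg hG hw y κ, mul_nonneg (hop G hG y κ).cast_nonneg hρ]
    · rw [Set.inter_eq_self_of_subset_right hyS, hstep]

theorem stmt4_general {V : Type*} [Fintype V] (G : SimpleGraph V) (hG : G.IsTree)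
    (w : V → V → ℝ) (hpos : Wpos G w) (ρ : ℝ) (hρ : 0 < ρ)
    (κ : V) (hκ : IsPrime G hG w ρ κ) (x : V) (hx : x ≠ κ) :
    bTimeT G hG w ρ x
      = (hop G hG x κ : ℝ) * ρ + pw G hG w x κ + bTime G hG w ρ κ (Bbr G κ x) :=
  bTime_eq_of_isPrime hG hρ.le (fun a b h => (hpos a b h).le) hκ hx (Set.mem_univ x)
    (Set.subset_univ _)

/-- If `κ̂` is a prime broadcast center, then for every `x ≠ κ̂`,
`b_time(x,T) = d(x,κ̂)·ρ + w̃(x,κ̂) + b_time(κ̂, B(κ̂,x))`. -/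
theorem stmt4 {V : Type*} [Fintype V] [DecidableEq V] (G : SimpleGraph V) (hG : G.IsTree)
    (w : V → V → ℝ) (hsym : Wsymm w) (hpos : Wpos G w) (ρ : ℝ) (hρ : 0 < ρ)
    (κ : V) (hκ : IsPrime G hG w ρ κ) (x : V) (hx : x ≠ κ) :
    bTimeT G hG w ρ x
      = (hop G hG x κ : ℝ) * ρ + pw G hG w x κ + bTime G hG w ρ κ (Bbr G κ x) :=
  stmt4_general G hG w hpos ρ hρ κ hκ x hx

end Postal
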